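/- If 0 ≤ x ≤ 1/3, x ≤ y ≤ 1, and x + y ≥ 1, then 3(1-x)(x+y)^2 ≥ 4y + x - 1, and hence 3(1-x)(x+y)^2/(4y + x - 1) ≥ 1. -/

import Mathlib

/-! Writing `s = x + y`, the difference `3(1-x)s² - (4s - 3x - 1)` factors as
`(s - 1)(3(1-x)s - (1 + 3x))`; for `s ≥ 1` and `x ≤ 1/3` both factors are nonnegative. -/

lemma three_mul_one_sub_mul_sq_sub_eq (x s : ℝ) :
    3 * (1 - x) * s ^ 2 - (4 * s - 3 * x - 1) = (s - 1) * (3 * (1 - x) * s - (1 + 3 * x)) := by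
  ring

lemma le_three_mul_one_sub_mul_sq {x s : ℝ} (hx : x ≤ 1 / 3) (hs : 1 ≤ s) :
    4 * s - 3 * x - 1 ≤ 3 * (1 - x) * s ^ 2 := by
  have hfactor : 0 ≤ 3 * (1 - x) * s - (1 + 3 * x) := by nlinarith
  have hprod := mul_nonneg (sub_nonneg.2 hs) hfactor
  linarith [three_mul_one_sub_mul_sq_sub_eq x s]

theorem stmt_7 (x y : ℝ) (hx : x ≤ 1/3)
    (hsum : 1 ≤ x + y) :
    3*(1-x)*(x+y)^2 ≥ 4*y + x - 1 ∧ 3*(1-x)*(x+y)^2/(4*y + x - 1) ≥ 1 := by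
  have hkey : 4 * y + x - 1 ≤ 3 * (1 - x) * (x + y) ^ 2 := by
    have h := le_three_mul_one_sub_mul_sq hx hsum
    linarith
  have hden : 0 < 4 * y + x - 1 := by linarith
  exact ⟨hkey, (le_div_iff₀ hden).2 (by linarith)⟩
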